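/- arXiv:1907.03819 — 8 statements merged into one kernel-verified Lean document; each statement's English description precedes it below -/
import Mathlib

section
/- Let a, b > 0 with a > b and let F : (0,1) → ℝ, F(k) = −log(1−k) + ((a−b)/a)·log(a/(a−b) − k) + (b/a)·log k. Then for every k ∈ (0,1), F'(k) = b/((a−b)·k·(k−1)·(k − a/(a−b))) · ((a−b)/b) = 1/(k(1−k)((1−a/b)k + a/b)); consequently the inverse function k(x) = F⁻¹(x) satisfies k'(x) = k(x)(1−k(x))((1−a/b)k(x) + a/b). -/
/-! With `p = (a - b)/a` and `q = b/a = 1 - p`, one has `F'(k) = 1/(1-k) - p²/(1 - p k) + q/k`, whose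
numerator over `k (1-k) (1 - p k)` collapses to `q`; this is the claimed derivative. It is positive on
`(0,1)`, so the inverse function theorem gives `K' = 1 / F'(K)` for any continuous right inverse `K`. -/

open Set Real

lemma one_sub_mul_add_pos {c k : ℝ} (hc : 0 ≤ c) (hk : k ∈ Ioo (0 : ℝ) 1) :
    0 < (1 - c) * k + c := by
  obtain ⟨hk0, hk1⟩ := hk
  nlinarith

lemma hasDerivAt_solitonProfile {a b k : ℝ} (hb : 0 < b) (hab : b < a) (hk : k ∈ Ioo (0 : ℝ) 1) :
    HasDerivAt (fun k => -log (1 - k) + ((a - b) / a) * log (a / (a - b) - k) + (b / a) * log k)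
      (1 / (k * (1 - k) * ((1 - a / b) * k + a / b))) k := by
  obtain ⟨hk0, hk1⟩ := hk
  have ha : a ≠ 0 := by linarith
  have hab' : a - b ≠ 0 := by linarith
  have h1k : 1 - k ≠ 0 := by linarith
  have hak : a - k * (a - b) ≠ 0 := by nlinarith
  have hpole : a / (a - b) - k = (a - k * (a - b)) / (a - b) := by field_simp
  have hlinear : (1 - a / b) * k + a / b = (a - k * (a - b)) / b := by field_simp; ring
  have hlog_sub : ∀ c, c - k ≠ 0 → HasDerivAt (fun x => log (c - x)) (-1 / (c - k)) k :=
    fun c hc => by simpa using ((hasDerivAt_id k).const_sub c).log hc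
  refine (((hlog_sub 1 h1k).neg.add
    ((hlog_sub _ (hpole ▸ div_ne_zero hak hab')).const_mul ((a - b) / a))).add
    ((hasDerivAt_log hk0.ne').const_mul (b / a))).congr_deriv ?_
  rw [hpole, hlinear]
  field_simp
  ring

theorem stmt_3 (a b : ℝ) (hb : 0 < b) (hab : b < a)
    (F : ℝ → ℝ)
    (hF : ∀ k, F k = -Real.log (1 - k) + ((a - b) / a) * Real.log (a / (a - b) - k)
        + (b / a) * Real.log k) :
    (∀ k ∈ Set.Ioo (0:ℝ) 1,
        HasDerivAt F (1 / (k * (1 - k) * ((1 - a / b) * k + a / b))) k) ∧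
    (∀ K : ℝ → ℝ, (∀ x, K x ∈ Set.Ioo (0:ℝ) 1) → (∀ x, F (K x) = x) →
      Differentiable ℝ K →
      ∀ x, HasDerivAt K (K x * (1 - K x) * ((1 - a / b) * K x + a / b)) x) := by
  obtain rfl : F = _ := funext hF
  have hderiv := fun k (hk : k ∈ Ioo (0 : ℝ) 1) => hasDerivAt_solitonProfile hb hab hk
  refine ⟨hderiv, fun K hK hFK hKdiff x => ?_⟩
  obtain ⟨hK0, hK1⟩ := hK x
  have hF'_ne : 1 / (K x * (1 - K x) * ((1 - a / b) * K x + a / b)) ≠ 0 :=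
    one_div_ne_zero (mul_ne_zero (mul_ne_zero hK0.ne' (by linarith))
      (one_sub_mul_add_pos (div_pos (hb.trans hab) hb).le (hK x)).ne')
  simpa using (hderiv (K x) (hK x)).of_local_left_inverse (hKdiff x).continuousAt hF'_ne
    (Filter.Eventually.of_forall hFK)
end

section
/- Let a, b > 0 and let k : ℝ → (0,1) be a solution of k' = k(1−k)((1−a/b)k + a/b) on ℝ. Then k is strictly increasing, k(x) → 0 as x → −∞, and k(x) → 1 as x → +∞. -/
/-!
The right-hand side `F t = t (1 - t) ((1 - a/b) t + a/b)` is continuous and positive on `(0, 1)`,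
so `k` is strictly increasing and bounded, hence has limits at `±∞`. By the mean value theorem,
if a function has a finite limit and its derivative has a limit too, the latter is `0`; so `F`
vanishes at both limits of `k`, which forces them to be `0` and `1`.
-/

open Filter Set Topology

theorem eq_zero_of_hasDerivAt_of_tendsto_atTop {f f' : ℝ → ℝ} {L c : ℝ}
    (hf : ∀ x, HasDerivAt f (f' x) x) (hfL : Tendsto f atTop (𝓝 L))
    (hf'c : Tendsto f' atTop (𝓝 c)) : c = 0 := by
  have hmvt : ∀ x, ∃ ξ ∈ Ioo x (x + 1), f' ξ = (f (x + 1) - f x) / (x + 1 - x) := fun x =>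
    exists_hasDerivAt_eq_slope f f' (lt_add_one x)
      (fun y _ => (hf y).continuousAt.continuousWithinAt) fun y _ => hf y
  choose ξ hξ hξslope using hmvt
  have hξ_top : Tendsto ξ atTop atTop := tendsto_atTop_mono (fun x => (hξ x).1.le) tendsto_id
  have hslope : Tendsto (fun x => f (x + 1) - f x) atTop (𝓝 (L - L)) :=
    (hfL.comp (tendsto_atTop_add_const_right _ 1 tendsto_id)).sub hfL
  rw [sub_self] at hslope
  refine tendsto_nhds_unique (hf'c.comp hξ_top) (hslope.congr fun x => ?_)
  simp [hξslope]

theorem eq_zero_of_hasDerivAt_of_tendsto_atBot {f f' : ℝ → ℝ} {L c : ℝ}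
    (hf : ∀ x, HasDerivAt f (f' x) x) (hfL : Tendsto f atBot (𝓝 L))
    (hf'c : Tendsto f' atBot (𝓝 c)) : c = 0 := by
  have hneg : ∀ x, HasDerivAt (fun y => f (-y)) (-f' (-x)) x := fun x => by
    simpa [Function.comp_def] using (hf (-x)).comp x (hasDerivAt_neg x)
  simpa using eq_zero_of_hasDerivAt_of_tendsto_atTop hneg (hfL.comp tendsto_neg_atTop_atBot)
    (hf'c.comp tendsto_neg_atTop_atBot).neg

section Autonomous

variable {F k : ℝ → ℝ}

theorem strictMono_of_hasDerivAt_autonomous (hFpos : ∀ t ∈ Ioo (0 : ℝ) 1, 0 < F t)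
    (hk : ∀ x, k x ∈ Ioo (0 : ℝ) 1) (hode : ∀ x, HasDerivAt k (F (k x)) x) : StrictMono k :=
  strictMono_of_hasDerivAt_pos hode fun x => hFpos _ (hk x)

theorem tendsto_atTop_one_of_hasDerivAt_autonomous (hF : Continuous F)
    (hFpos : ∀ t ∈ Ioo (0 : ℝ) 1, 0 < F t)
    (hk : ∀ x, k x ∈ Ioo (0 : ℝ) 1) (hode : ∀ x, HasDerivAt k (F (k x)) x) :
    Tendsto k atTop (𝓝 1) := by
  have hbdd : BddAbove (range k) := ⟨1, by rintro _ ⟨x, rfl⟩; exact (hk x).2.le⟩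
  set L := ⨆ x, k x
  have hL : Tendsto k atTop (𝓝 L) :=
    tendsto_atTop_ciSup (strictMono_of_hasDerivAt_autonomous hFpos hk hode).monotone hbdd
  have hFL : F L = 0 := eq_zero_of_hasDerivAt_of_tendsto_atTop hode hL ((hF.tendsto L).comp hL)
  have hL0 : 0 < L := (hk 0).1.trans_le (le_ciSup hbdd 0)
  have hL1 : L ≤ 1 := ciSup_le fun x => (hk x).2.le
  obtain hL1 | hL1 := hL1.eq_or_lt
  · exact hL1 ▸ hL
  · exact absurd hFL (hFpos L ⟨hL0, hL1⟩).ne'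

theorem tendsto_atBot_zero_of_hasDerivAt_autonomous (hF : Continuous F)
    (hFpos : ∀ t ∈ Ioo (0 : ℝ) 1, 0 < F t)
    (hk : ∀ x, k x ∈ Ioo (0 : ℝ) 1) (hode : ∀ x, HasDerivAt k (F (k x)) x) :
    Tendsto k atBot (𝓝 0) := by
  have hbdd : BddBelow (range k) := ⟨0, by rintro _ ⟨x, rfl⟩; exact (hk x).1.le⟩
  set M := ⨅ x, k x
  have hM : Tendsto k atBot (𝓝 M) :=
    tendsto_atBot_ciInf (strictMono_of_hasDerivAt_autonomous hFpos hk hode).monotone hbdd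
  have hFM : F M = 0 := eq_zero_of_hasDerivAt_of_tendsto_atBot hode hM ((hF.tendsto M).comp hM)
  have hM1 : M < 1 := (ciInf_le hbdd 0).trans_lt (hk 0).2
  have hM0 : 0 ≤ M := le_ciInf fun x => (hk x).1.le
  obtain hM0 | hM0 := hM0.lt_or_eq
  · exact absurd hFM (hFpos M ⟨hM0, hM1⟩).ne'
  · exact hM0 ▸ hM

end Autonomous

theorem logistic_rhs_pos {r t : ℝ} (hr : 0 < r) (ht : t ∈ Ioo (0 : ℝ) 1) :
    0 < t * (1 - t) * ((1 - r) * t + r) := by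
  obtain ⟨ht0, ht1⟩ := ht
  have hlin : 0 < (1 - r) * t + r := by nlinarith
  have h1t : 0 < 1 - t := sub_pos.2 ht1
  positivity

theorem stmt_5 (a b : ℝ) (ha : 0 < a) (hb : 0 < b) (k : ℝ → ℝ)
    (hk : ∀ x, k x ∈ Set.Ioo (0:ℝ) 1)
    (hode : ∀ x, HasDerivAt k (k x * (1 - k x) * ((1 - a / b) * k x + a / b)) x) :
    StrictMono k ∧ Tendsto k atBot (nhds 0) ∧ Tendsto k atTop (nhds 1) := by
  set F : ℝ → ℝ := fun t => t * (1 - t) * ((1 - a / b) * t + a / b)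
  have hF : Continuous F := by fun_prop
  have hFpos : ∀ t ∈ Ioo (0 : ℝ) 1, 0 < F t := fun t => logistic_rhs_pos (div_pos ha hb)
  exact ⟨strictMono_of_hasDerivAt_autonomous hFpos hk hode,
    tendsto_atBot_zero_of_hasDerivAt_autonomous hF hFpos hk hode,
    tendsto_atTop_one_of_hasDerivAt_autonomous hF hFpos hk hode⟩
end

section
/- Let a, b > 0 with a ≠ b and suppose k : ℝ → (0,1) satisfies the general ODE k' = k(1−k)(μ·k + c) for constants μ, c ∈ ℝ, with the asymptotic conditions k'(x)/k(x) → a/b as x → −∞ and k'(x)/(1−k(x)) → 1 as x → +∞. Then c = a/b and μ = 1 − a/b. -/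
/-!
Both limits of `k` are forced by its logarithmic derivatives. Since `(log k)' = k'/k` tends to
`a/b > 0` at `-∞`, `log k` decreases at least linearly there, so `k → 0`; likewise
`(log (1 - k))' = -k'/(1 - k)` tends to `-1` at `+∞`, so `k → 1`. Along the ODE,
`k'/k = (1 - k)(μk + c) → c` and `k'/(1 - k) = k(μk + c) → μ + c`, whence `c = a/b` and
`μ + c = 1`.
-/

open Filter Topology Real

lemma tendsto_atTop_of_tendsto_deriv_pos {f : ℝ → ℝ} {d : ℝ} (hf : Differentiable ℝ f)
    (hd : 0 < d) (h : Tendsto (deriv f) atTop (𝓝 d)) : Tendsto f atTop atTop := by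
  obtain ⟨X, hX⟩ := eventually_atTop.1 (h.eventually (eventually_ge_nhds (half_lt_self hd)))
  have hgrowth : ∀ y ≥ X, f X + d / 2 * (y - X) ≤ f y := fun y hy => by
    have := (convex_Ici X).mul_sub_le_image_sub_of_le_deriv hf.continuous.continuousOn
      hf.differentiableOn (fun x hx => hX x (interior_subset hx)) X Set.self_mem_Ici y hy hy
    linarith
  refine tendsto_atTop_mono' atTop (eventually_atTop.2 ⟨X, hgrowth⟩) ?_
  exact tendsto_atTop_add_const_left _ _
    ((tendsto_id.atTop_add (tendsto_const_nhds (x := -X))).const_mul_atTop (half_pos hd))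

lemma tendsto_atBot_of_tendsto_deriv_pos {f : ℝ → ℝ} {d : ℝ} (hf : Differentiable ℝ f)
    (hd : 0 < d) (h : Tendsto (deriv f) atBot (𝓝 d)) : Tendsto f atBot atBot := by
  obtain ⟨X, hX⟩ := eventually_atBot.1 (h.eventually (eventually_ge_nhds (half_lt_self hd)))
  have hgrowth : ∀ y ≤ X, f y ≤ f X + d / 2 * (y - X) := fun y hy => by
    have := (convex_Iic X).mul_sub_le_image_sub_of_le_deriv hf.continuous.continuousOn
      hf.differentiableOn (fun x hx => hX x (interior_subset (s := Set.Iic X) hx))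
      y hy X Set.self_mem_Iic hy
    linarith
  refine tendsto_atBot_mono' atBot (eventually_atBot.2 ⟨X, hgrowth⟩) ?_
  exact tendsto_atBot_add_const_left _ _
    ((tendsto_id.atBot_add (tendsto_const_nhds (x := -X))).const_mul_atBot (half_pos hd))

lemma tendsto_nhds_zero_of_tendsto_log_atBot {α : Type*} {l : Filter α} {u : α → ℝ}
    (hu : ∀ x, u x ≠ 0) (h : Tendsto (fun x => log (u x)) l atBot) : Tendsto u l (𝓝 0) := by
  rw [tendsto_zero_iff_abs_tendsto_zero]
  exact (tendsto_exp_atBot.comp h).congr fun x => exp_log_eq_abs (hu x)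

lemma tendsto_zero_atBot_of_tendsto_logDeriv_pos {u : ℝ → ℝ} {d : ℝ} (hu : Differentiable ℝ u)
    (hu0 : ∀ x, u x ≠ 0) (hd : 0 < d) (h : Tendsto (logDeriv u) atBot (𝓝 d)) :
    Tendsto u atBot (𝓝 0) := by
  refine tendsto_nhds_zero_of_tendsto_log_atBot hu0
    (tendsto_atBot_of_tendsto_deriv_pos (hu.log hu0) hd ?_)
  simpa only [← Function.comp_def,
    funext fun x => deriv_log_comp_eq_logDeriv (hu x) (hu0 x)] using h

lemma tendsto_zero_atTop_of_tendsto_logDeriv_neg {u : ℝ → ℝ} {d : ℝ} (hu : Differentiable ℝ u)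
    (hu0 : ∀ x, u x ≠ 0) (hd : d < 0) (h : Tendsto (logDeriv u) atTop (𝓝 d)) :
    Tendsto u atTop (𝓝 0) := by
  refine tendsto_nhds_zero_of_tendsto_log_atBot hu0 (tendsto_neg_atTop_iff.1 ?_)
  refine tendsto_atTop_of_tendsto_deriv_pos (hu.log hu0).neg (neg_pos.2 hd) ?_
  refine h.neg.congr fun x => ?_
  rw [deriv.fun_neg, ← deriv_log_comp_eq_logDeriv (hu x) (hu0 x)]
  rfl

theorem stmt_7_general (a b μ c : ℝ) (ha : 0 < a) (hb : 0 < b) (k : ℝ → ℝ)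
    (hk : ∀ x, k x ∈ Set.Ioo (0:ℝ) 1)
    (hode : ∀ x, HasDerivAt k (k x * (1 - k x) * (μ * k x + c)) x)
    (hmin : Tendsto (fun x => deriv k x / k x) atBot (nhds (a / b)))
    (hplus : Tendsto (fun x => deriv k x / (1 - k x)) atTop (nhds 1)) :
    c = a / b ∧ μ = 1 - a / b := by
  have hk0 (x : ℝ) : k x ≠ 0 := (hk x).1.ne'
  have hk1 (x : ℝ) : 1 - k x ≠ 0 := (sub_pos.2 (hk x).2).ne'
  have hdiff : Differentiable ℝ k := fun x => (hode x).differentiableAt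
  have hk_bot : Tendsto k atBot (𝓝 0) :=
    tendsto_zero_atBot_of_tendsto_logDeriv_pos hdiff hk0 (div_pos ha hb) hmin
  have hk_top : Tendsto k atTop (𝓝 1) := by
    have h : Tendsto (fun x => 1 - k x) atTop (𝓝 0) := by
      refine tendsto_zero_atTop_of_tendsto_logDeriv_neg (hdiff.const_sub 1) hk1
        neg_one_lt_zero (hplus.neg.congr fun x => ?_)
      rw [logDeriv_apply, deriv_const_sub, neg_div]
    simpa using h.const_sub 1
  have hmin_c : Tendsto (fun x => deriv k x / k x) atBot (𝓝 ((1 - 0) * (μ * 0 + c))) := by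
    refine ((hk_bot.const_sub 1).mul ((hk_bot.const_mul μ).add_const c)).congr fun x => ?_
    rw [(hode x).deriv]
    field_simp [hk0 x]
  have hplus_μc : Tendsto (fun x => deriv k x / (1 - k x)) atTop (𝓝 (1 * (μ * 1 + c))) := by
    refine (hk_top.mul ((hk_top.const_mul μ).add_const c)).congr fun x => ?_
    rw [(hode x).deriv]
    field_simp [hk1 x]
  have hc := tendsto_nhds_unique hmin hmin_c
  have hμc := tendsto_nhds_unique hplus_μc hplus
  norm_num at hc hμc
  exact ⟨hc.symm, by linarith⟩

theorem stmt_7 (a b μ c : ℝ) (ha : 0 < a) (hb : 0 < b) (hab : a ≠ b) (k : ℝ → ℝ)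
    (hk : ∀ x, k x ∈ Set.Ioo (0:ℝ) 1)
    (hode : ∀ x, HasDerivAt k (k x * (1 - k x) * (μ * k x + c)) x)
    (hmin : Tendsto (fun x => deriv k x / k x) atBot (nhds (a / b)))
    (hplus : Tendsto (fun x => deriv k x / (1 - k x)) atTop (nhds 1)) :
    c = a / b ∧ μ = 1 - a / b :=
  stmt_7_general a b μ c ha hb k hk hode hmin hplus
end

section
/- Let k, n, m : ℝ → ℝ be differentiable, let V = k − n² − m² be positive everywhere, and suppose there exist constants μ ≠ 0 and c_k, c_m, c_n such that V = k'/(μk + c_k) = m'/(μm + c_m) = n'/(μn + c_n) everywhere (with the denominators nonvanishing). Then m and n are affine functions of k: there exist constants a_m, b_m, a_n, b_n with m = a_m·k + b_m and n = a_n·k + b_n. -/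
/-!
If `k' = V (μ k + c_k)` and `m' = V (μ m + c_m)`, the quotient `(μ m + c_m) / (μ k + c_k)` has
derivative `μ V ((μ m + c_m)(μ k + c_k) - (μ k + c_k)(μ m + c_m)) / (μ k + c_k)² = 0`,
so it is a constant `r`. Then `m' = V r (μ k + c_k) = r k'`, hence `m - r k` is constant too.
-/

section

variable {𝕜 : Type*} [RCLike 𝕜] {k m V : 𝕜 → 𝕜} {μ ck cm : 𝕜}

theorem exists_eq_const_mul_of_deriv_eq_mul_affine (hk : Differentiable 𝕜 k)
    (hm : Differentiable 𝕜 m) (hdk : ∀ x, μ * k x + ck ≠ 0)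
    (hk' : ∀ x, deriv k x = V x * (μ * k x + ck))
    (hm' : ∀ x, deriv m x = V x * (μ * m x + cm)) :
    ∃ r, ∀ x, μ * m x + cm = r * (μ * k x + ck) := by
  set q : 𝕜 → 𝕜 := fun x => (μ * m x + cm) / (μ * k x + ck)
  have hq : ∀ x, HasDerivAt q 0 x := fun x => by
    have hnum := ((hm x).hasDerivAt.const_mul μ).add_const cm
    have hden := ((hk x).hasDerivAt.const_mul μ).add_const ck
    refine (hnum.div hden (hdk x)).congr_deriv ?_
    rw [hk', hm']
    ring
  refine ⟨q 0, fun x => ?_⟩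
  rw [← is_const_of_deriv_eq_zero (fun y => (hq y).differentiableAt) (fun y => (hq y).deriv) x 0]
  exact (div_mul_cancel₀ _ (hdk x)).symm

theorem exists_eq_const_mul_add_of_deriv_eq_const_mul (hk : Differentiable 𝕜 k)
    (hm : Differentiable 𝕜 m) {r : 𝕜} (h : ∀ x, deriv m x = r * deriv k x) :
    ∃ b, ∀ x, m x = r * k x + b := by
  have hd : ∀ x, HasDerivAt (fun x => m x - r * k x) 0 x := fun x => by
    have hsub := (hm x).hasDerivAt.sub ((hk x).hasDerivAt.const_mul r)
    rwa [h, sub_self] at hsub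
  refine ⟨m 0 - r * k 0, fun x => ?_⟩
  rw [← is_const_of_deriv_eq_zero (fun y => (hd y).differentiableAt) (fun y => (hd y).deriv) x 0]
  ring

theorem exists_eq_mul_add_of_deriv_eq_mul_affine (hk : Differentiable 𝕜 k)
    (hm : Differentiable 𝕜 m) (hdk : ∀ x, μ * k x + ck ≠ 0)
    (hk' : ∀ x, deriv k x = V x * (μ * k x + ck))
    (hm' : ∀ x, deriv m x = V x * (μ * m x + cm)) :
    ∃ a b, ∀ x, m x = a * k x + b := by
  obtain ⟨r, hr⟩ := exists_eq_const_mul_of_deriv_eq_mul_affine hk hm hdk hk' hm'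
  have h : ∀ x, deriv m x = r * deriv k x := fun x => by
    rw [hm', hk', hr]
    ring
  exact ⟨r, exists_eq_const_mul_add_of_deriv_eq_const_mul hk hm h⟩

end

theorem stmt_8_general (k n m : ℝ → ℝ) (hk : Differentiable ℝ k) (hn : Differentiable ℝ n)
    (hm : Differentiable ℝ m) (V : ℝ → ℝ)
    (μ ck cm cn : ℝ)
    (hdk : ∀ x, μ * k x + ck ≠ 0) (hdm : ∀ x, μ * m x + cm ≠ 0)
    (hdn : ∀ x, μ * n x + cn ≠ 0)
    (h1 : ∀ x, V x = deriv k x / (μ * k x + ck))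
    (h2 : ∀ x, V x = deriv m x / (μ * m x + cm))
    (h3 : ∀ x, V x = deriv n x / (μ * n x + cn)) :
    ∃ am bm an bn : ℝ, ∀ x, m x = am * k x + bm ∧ n x = an * k x + bn := by
  have hk' : ∀ x, deriv k x = V x * (μ * k x + ck) := fun x =>
    ((eq_div_iff (hdk x)).mp (h1 x)).symm
  have hm' : ∀ x, deriv m x = V x * (μ * m x + cm) := fun x =>
    ((eq_div_iff (hdm x)).mp (h2 x)).symm
  have hn' : ∀ x, deriv n x = V x * (μ * n x + cn) := fun x =>
    ((eq_div_iff (hdn x)).mp (h3 x)).symm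
  obtain ⟨am, bm, hM⟩ := exists_eq_mul_add_of_deriv_eq_mul_affine hk hm hdk hk' hm'
  obtain ⟨an, bn, hN⟩ := exists_eq_mul_add_of_deriv_eq_mul_affine hk hn hdk hk' hn'
  exact ⟨am, bm, an, bn, fun x => ⟨hM x, hN x⟩⟩

theorem stmt_8 (k n m : ℝ → ℝ) (hk : Differentiable ℝ k) (hn : Differentiable ℝ n)
    (hm : Differentiable ℝ m) (V : ℝ → ℝ) (hV : ∀ x, V x = k x - (n x)^2 - (m x)^2)
    (hVpos : ∀ x, 0 < V x) (μ ck cm cn : ℝ) (hμ : μ ≠ 0)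
    (hdk : ∀ x, μ * k x + ck ≠ 0) (hdm : ∀ x, μ * m x + cm ≠ 0)
    (hdn : ∀ x, μ * n x + cn ≠ 0)
    (h1 : ∀ x, V x = deriv k x / (μ * k x + ck))
    (h2 : ∀ x, V x = deriv m x / (μ * m x + cm))
    (h3 : ∀ x, V x = deriv n x / (μ * n x + cn)) :
    ∃ am bm an bn : ℝ, ∀ x, m x = am * k x + bm ∧ n x = an * k x + bn :=
  stmt_8_general k n m hk hn hm V μ ck cm cn hdk hdm hdn h1 h2 h3
end

section
/- Let a, b > 0 with a > b and let k : ℝ → (0,1) be the solution of the soliton ODE determined implicitly by x + const = −log(1−k) + ((a−b)/a)·log(a/(a−b) − k) + (b/a)·log k. Then 1 − k(x) = C·e^(−x) + o(e^(−x)) as x → +∞ for some constant C > 0. -/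
/-! Exponentiating the implicit relation gives `1 - k x = e^{-x} · Φ (k x)` with
`Φ t = exp (-c₀ + ((a-b)/a) log (a/(a-b) - t) + (b/a) log t)`. Since `Φ` is bounded on `(0, 1]`,
this forces `k x → 1`, and then `Φ (k x) → Φ 1 > 0` by continuity, so `C = Φ 1`. -/

open Filter Asymptotics Topology

namespace SolitonTail

noncomputable def tailFactor (A B s c₀ t : ℝ) : ℝ :=
  Real.exp (-c₀ + A * Real.log (s - t) + B * Real.log t)

variable {A B s c₀ : ℝ}

theorem one_sub_eq_exp_neg_mul_tailFactor {x t : ℝ} (ht : t < 1)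
    (h : x + c₀ = -Real.log (1 - t) + A * Real.log (s - t) + B * Real.log t) :
    1 - t = Real.exp (-x) * tailFactor A B s c₀ t := by
  have hlog : Real.log (1 - t) = -x + (-c₀ + A * Real.log (s - t) + B * Real.log t) := by
    linarith
  rw [tailFactor, ← Real.exp_add, ← hlog, Real.exp_log (sub_pos.mpr ht)]

theorem tailFactor_le {t : ℝ} (hA : 0 ≤ A) (hB : 0 ≤ B) (ht0 : 0 < t) (ht1 : t ≤ 1)
    (hts : t < s) : tailFactor A B s c₀ t ≤ Real.exp (-c₀ + A * Real.log s) := by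
  have hlog_s : Real.log (s - t) ≤ Real.log s :=
    Real.log_le_log (sub_pos.mpr hts) (by linarith)
  have hlog_t : Real.log t ≤ 0 := Real.log_nonpos ht0.le ht1
  refine Real.exp_le_exp.mpr ?_
  linarith [mul_le_mul_of_nonneg_left hlog_s hA, mul_nonpos_of_nonneg_of_nonpos hB hlog_t]

theorem continuousAt_tailFactor {t : ℝ} (hts : s ≠ t) (ht : t ≠ 0) :
    ContinuousAt (tailFactor A B s c₀) t := by
  unfold tailFactor
  have := sub_ne_zero.mpr hts
  fun_prop (disch := assumption)

end SolitonTail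

theorem tendsto_one_of_one_sub_le_mul_exp_neg {k : ℝ → ℝ} {M : ℝ} (hk : ∀ x, k x < 1)
    (hM : ∀ x, 1 - k x ≤ M * Real.exp (-x)) : Tendsto k atTop (𝓝 1) := by
  have hdecay : Tendsto (fun x => M * Real.exp (-x)) atTop (𝓝 0) := by
    simpa using Real.tendsto_exp_neg_atTop_nhds_zero.const_mul M
  have hgap : Tendsto (fun x => 1 - k x) atTop (𝓝 0) :=
    tendsto_of_tendsto_of_tendsto_of_le_of_le tendsto_const_nhds hdecay
      (fun x => (sub_pos.mpr (hk x)).le) hM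
  simpa using hgap.const_sub 1

theorem isLittleO_sub_const_mul_of_tendsto {α : Type*} {l : Filter α} {u v g : α → ℝ}
    {L : ℝ}
    (hu : ∀ x, u x = v x * g x) (hg : Tendsto g l (𝓝 L)) :
    (fun x => u x - L * v x) =o[l] v := by
  have hsmall : (fun x => g x - L) =o[l] (fun _ => (1 : ℝ)) :=
    (isLittleO_one_iff ℝ).mpr (by simpa using hg.sub_const L)
  simpa only [one_mul] using (hsmall.mul_isBigO (isBigO_refl v l)).congr_left
    fun x => by rw [hu]; ring

open SolitonTail in
theorem stmt_12 (a b : ℝ) (hb : 0 < b) (hab : b < a)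
    (F : ℝ → ℝ)
    (hF : ∀ k, F k = -Real.log (1 - k) + ((a - b) / a) * Real.log (a / (a - b) - k)
        + (b / a) * Real.log k)
    (k : ℝ → ℝ) (hk : ∀ x, k x ∈ Set.Ioo (0:ℝ) 1)
    (c₀ : ℝ) (himp : ∀ x, x + c₀ = F (k x)) :
    ∃ C : ℝ, 0 < C ∧
      (fun x => (1 - k x) - C * Real.exp (-x)) =o[atTop] (fun x => Real.exp (-x)) := by
  have ha : 0 < a := hb.trans hab
  have hs : 1 < a / (a - b) := (one_lt_div (sub_pos.mpr hab)).mpr (by linarith)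
  set Φ := tailFactor ((a - b) / a) (b / a) (a / (a - b)) c₀
  have hrep : ∀ x, 1 - k x = Real.exp (-x) * Φ (k x) := fun x =>
    one_sub_eq_exp_neg_mul_tailFactor (hk x).2 (by rw [himp, hF])
  have hbound (x : ℝ) :
      1 - k x ≤ Real.exp (-c₀ + (a - b) / a * Real.log (a / (a - b))) * Real.exp (-x) := by
    rw [hrep, mul_comm]
    gcongr
    exact tailFactor_le (by bound) (by positivity) (hk x).1 (hk x).2.le (by linarith [(hk x).2])
  have hlim : Tendsto k atTop (𝓝 1) :=
    tendsto_one_of_one_sub_le_mul_exp_neg (fun x => (hk x).2) hbound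
  have hΦ : Tendsto (Φ ∘ k) atTop (𝓝 (Φ 1)) :=
    (continuousAt_tailFactor hs.ne' one_ne_zero).tendsto.comp hlim
  exact ⟨Φ 1, Real.exp_pos _, isLittleO_sub_const_mul_of_tendsto hrep hΦ⟩
end

section
/- Let a, b > 0 with a > b and let k : ℝ → (0,1) be the solution of the soliton ODE k' = k(1−k)((1−a/b)k + a/b). Then k(x) = C·e^((a/b)x) + o(e^((a/b)x)) as x → −∞ for some constant C > 0. -/
/-!
Write `k = g e^{μx}` with `μ = a/b`. Then `g'/g = k ((1 - 2μ) + (μ - 1) k) < 0`, so `g` decreases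
and it suffices to bound `g` near `-∞`. As `|g'/g| ≤ (2μ - 1) k` while `k' ≥ (1 - k 0) k` on
`(-∞, 0]`, the product `g · exp ((2μ - 1) k / (1 - k 0))` is monotone there, which bounds `g`.
Hence `g` increases to a finite positive limit `C` as `x → -∞`.
-/

open Filter Asymptotics Set Topology

theorem Asymptotics.isLittleO_sub_const_mul_of_tendsto_div {α : Type*} {l : Filter α}
    {f e : α → ℝ} {C : ℝ} (he : ∀ x, e x ≠ 0) (h : Tendsto (fun x => f x / e x) l (𝓝 C)) :
    (fun x => f x - C * e x) =o[l] e := by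
  rw [isLittleO_iff_tendsto' (Eventually.of_forall fun x hx => absurd hx (he x))]
  have : Tendsto (fun x => f x / e x - C) l (𝓝 0) := by simpa using h.sub_const C
  refine this.congr fun x => ?_
  rw [sub_div, mul_div_cancel_right₀ _ (he x)]

lemma one_le_sub_mul_add {μ t : ℝ} (hμ : 1 ≤ μ) (ht : t ≤ 1) :
    1 ≤ (1 - μ) * t + μ := by nlinarith

lemma neg_decay_rate_le_div_mul_growth {μ t c : ℝ} (hμ : 1 ≤ μ) (ht₀ : 0 < t) (ht₁ : t < 1)
    (hc : 0 < c) (hct : c ≤ 1 - t) :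
    -(t * ((1 - 2 * μ) + (μ - 1) * t)) ≤ (2 * μ - 1) / c * (t * (1 - t) * ((1 - μ) * t + μ)) := by
  have hfac : c ≤ (1 - t) * ((1 - μ) * t + μ) := by
    nlinarith [one_le_sub_mul_add hμ ht₁.le]
  have hgrowth : (2 * μ - 1) * t ≤ (2 * μ - 1) / c * (t * (1 - t) * ((1 - μ) * t + μ)) := by
    calc (2 * μ - 1) * t = (2 * μ - 1) / c * (t * c) := by field_simp
      _ ≤ _ := by
        rw [mul_assoc t]
        exact mul_le_mul_of_nonneg_left (mul_le_mul_of_nonneg_left hfac ht₀.le)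
          (div_nonneg (by linarith) hc.le)
  nlinarith [mul_nonneg (sq_nonneg t) (sub_nonneg.2 hμ)]

section SolitonODE

variable {μ : ℝ} {k : ℝ → ℝ}

theorem strictMono_of_soliton (hμ : 1 ≤ μ) (hk : ∀ x, k x ∈ Ioo (0 : ℝ) 1)
    (hode : ∀ x, HasDerivAt k (k x * (1 - k x) * ((1 - μ) * k x + μ)) x) : StrictMono k :=
  strictMono_of_hasDerivAt_pos hode fun x => by
    obtain ⟨h₀, h₁⟩ := hk x
    have := one_le_sub_mul_add hμ h₁.le
    exact mul_pos (mul_pos h₀ (by linarith)) (by linarith)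

theorem hasDerivAt_mul_exp_neg (hode : ∀ x, HasDerivAt k (k x * (1 - k x) * ((1 - μ) * k x + μ)) x)
    (x : ℝ) :
    HasDerivAt (fun x => k x * Real.exp (-(μ * x)))
      (k x * Real.exp (-(μ * x)) * (k x * ((1 - 2 * μ) + (μ - 1) * k x))) x := by
  have he : HasDerivAt (fun x => Real.exp (-(μ * x))) (Real.exp (-(μ * x)) * -μ) x := by
    simpa using ((hasDerivAt_id x).const_mul μ).neg.exp
  exact ((hode x).mul he).congr_deriv (by ring)

theorem antitone_mul_exp_neg (hμ : 1 ≤ μ) (hk : ∀ x, k x ∈ Ioo (0 : ℝ) 1)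
    (hode : ∀ x, HasDerivAt k (k x * (1 - k x) * ((1 - μ) * k x + μ)) x) :
    Antitone fun x => k x * Real.exp (-(μ * x)) := by
  refine antitone_of_deriv_nonpos (fun x => (hasDerivAt_mul_exp_neg hode x).differentiableAt)
    fun x => ?_
  obtain ⟨h₀, h₁⟩ := hk x
  rw [(hasDerivAt_mul_exp_neg hode x).deriv]
  refine mul_nonpos_of_nonneg_of_nonpos (by positivity) (mul_nonpos_of_nonneg_of_nonpos h₀.le ?_)
  nlinarith

theorem monotoneOn_mul_exp_neg_mul_exp (hμ : 1 ≤ μ) (hk : ∀ x, k x ∈ Ioo (0 : ℝ) 1)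
    (hode : ∀ x, HasDerivAt k (k x * (1 - k x) * ((1 - μ) * k x + μ)) x) :
    MonotoneOn (fun x => k x * Real.exp (-(μ * x)) * Real.exp ((2 * μ - 1) / (1 - k 0) * k x))
      (Iic 0) := by
  set β := (2 * μ - 1) / (1 - k 0)
  have hψ (x : ℝ) := (hasDerivAt_mul_exp_neg hode x).fun_mul ((hode x).const_mul β).exp
  have hdiff : Differentiable ℝ fun x => k x * Real.exp (-(μ * x)) * Real.exp (β * k x) :=
    fun x => (hψ x).differentiableAt
  refine monotoneOn_of_deriv_nonneg (convex_Iic 0) hdiff.continuous.continuousOn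
    hdiff.differentiableOn fun x hx => ?_
  rw [interior_Iic, mem_Iio] at hx
  obtain ⟨h₀, h₁⟩ := hk x
  have hkx : k x ≤ k 0 := (strictMono_of_soliton hμ hk hode).monotone hx.le
  have hbal := neg_decay_rate_le_div_mul_growth hμ h₀ h₁ (sub_pos.2 (hk 0).2) (by linarith)
  rw [(hψ x).deriv]
  have : 0 ≤ k x * Real.exp (-(μ * x)) * Real.exp (β * k x) := by positivity
  nlinarith

theorem bddAbove_range_mul_exp_neg (hμ : 1 ≤ μ) (hk : ∀ x, k x ∈ Ioo (0 : ℝ) 1)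
    (hode : ∀ x, HasDerivAt k (k x * (1 - k x) * ((1 - μ) * k x + μ)) x) :
    BddAbove (range fun x => k x * Real.exp (-(μ * x))) := by
  set β := (2 * μ - 1) / (1 - k 0)
  refine ⟨max (k 0 * Real.exp (-(μ * 0)) * Real.exp (β * k 0)) (k 0 * Real.exp (-(μ * 0))), ?_⟩
  rintro _ ⟨x, rfl⟩
  rcases le_total x 0 with hx | hx
  · have hβ : 0 ≤ β := div_nonneg (by linarith) (sub_pos.2 (hk 0).2).le
    calc k x * Real.exp (-(μ * x))
        ≤ k x * Real.exp (-(μ * x)) * Real.exp (β * k x) :=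
          le_mul_of_one_le_right (by have := (hk x).1; positivity)
            (Real.one_le_exp (mul_nonneg hβ (hk x).1.le))
      _ ≤ _ := monotoneOn_mul_exp_neg_mul_exp hμ hk hode hx (mem_Iic.2 le_rfl) hx
      _ ≤ _ := le_max_left _ _
  · exact (antitone_mul_exp_neg hμ hk hode hx).trans (le_max_right _ _)

end SolitonODE

theorem stmt_13 (a b : ℝ) (hb : 0 < b) (hab : b < a) (k : ℝ → ℝ)
    (hk : ∀ x, k x ∈ Set.Ioo (0:ℝ) 1)
    (hode : ∀ x, HasDerivAt k (k x * (1 - k x) * ((1 - a / b) * k x + a / b)) x) :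
    ∃ C : ℝ, 0 < C ∧
      (fun x => k x - C * Real.exp ((a / b) * x)) =o[atBot]
        (fun x => Real.exp ((a / b) * x)) := by
  have hμ : 1 ≤ a / b := (one_le_div hb).2 hab.le
  set g := fun x => k x * Real.exp (-(a / b * x))
  have hbdd := bddAbove_range_mul_exp_neg hμ hk hode
  have hlim : Tendsto g atBot (𝓝 (⨆ x, g x)) :=
    tendsto_atBot_ciSup (antitone_mul_exp_neg hμ hk hode) hbdd
  refine ⟨⨆ x, g x, (mul_pos (hk 0).1 (Real.exp_pos _)).trans_le (le_ciSup hbdd 0), ?_⟩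
  refine isLittleO_sub_const_mul_of_tendsto_div (fun x => Real.exp_ne_zero _) ?_
  simpa only [g, Real.exp_neg, div_eq_mul_inv] using hlim
end

section
/- Let a > b > 0 and k ∈ (0,1), and set r₂² = r₁^(2b/a) · (1−k) · (a/(a−b) − k)^(−(a−b)/a) · k^(−b/a) for r₁ > 0. Then for fixed r₁ > 0, the map k ↦ r₂² is smooth on a neighborhood of k = 1 with nonvanishing derivative at k = 1, so by the implicit function theorem k extends to a smooth function of (r₁, r₂²) in a neighborhood of (r₁, 0) with k(r₁, 0) = 1. -/
open Filter

theorem stmt_14 (a b r₁ : ℝ) (hb : 0 < b) (hab : b < a) (hr : 0 < r₁)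
    (Φ : ℝ × ℝ → ℝ)
    (hΦ : ∀ p : ℝ × ℝ, Φ p = p.1 ^ (2 * b / a) *
        ((1 - p.2) * (a / (a - b) - p.2) ^ (-((a - b) / a)) * p.2 ^ (-(b / a)))) :
    ContDiffAt ℝ (⊤ : ℕ∞) (fun k => Φ (r₁, k)) 1 ∧
    deriv (fun k => Φ (r₁, k)) 1 ≠ 0 ∧
    ∃ ψ : ℝ × ℝ → ℝ, ContDiffAt ℝ (⊤ : ℕ∞) ψ (r₁, 0) ∧ ψ (r₁, 0) = 1 ∧
      ∀ᶠ p : ℝ × ℝ in nhds (r₁, 0), Φ (p.1, ψ p) = p.2 := by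
  have ha : 0 < a := hb.trans hab
  have hamb : 0 < a - b := sub_pos.mpr hab
  set m : ℝ := 2 * b / a with hm
  set e₁ : ℝ := -((a - b) / a) with he₁
  set q : ℝ := -(b / a) with hq
  set c : ℝ := a / (a - b) with hc
  have hc1 : 0 < c - 1 := by
    rw [hc, sub_pos, lt_div_iff₀ hamb]
    linarith
  have hc1ne : c - 1 ≠ 0 := hc1.ne'
  set z : ℝ × ℝ := (r₁, 1) with hz
  -- value of Φ at z
  have hΦ0 : Φ z = 0 := by rw [hΦ]; simp [hz]
  -- smoothness of Φ at z
  have c1 : ContDiffAt ℝ (⊤ : ℕ∞) (fun p : ℝ × ℝ => p.1 ^ m) z :=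
    (Real.contDiffAt_rpow_const_of_ne hr.ne').comp z contDiffAt_fst
  have c2 : ContDiffAt ℝ (⊤ : ℕ∞) (fun p : ℝ × ℝ => 1 - p.2) z :=
    contDiffAt_const.sub contDiffAt_snd
  have c3 : ContDiffAt ℝ (⊤ : ℕ∞) (fun p : ℝ × ℝ => (c - p.2) ^ e₁) z := by
    have : ContDiffAt ℝ (⊤ : ℕ∞) (fun x : ℝ => x ^ e₁) (c - z.2) :=
      Real.contDiffAt_rpow_const_of_ne (by simpa [hz] using hc1ne)
    exact this.comp z (contDiffAt_const.sub contDiffAt_snd)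
  have c4 : ContDiffAt ℝ (⊤ : ℕ∞) (fun p : ℝ × ℝ => p.2 ^ q) z := by
    have : ContDiffAt ℝ (⊤ : ℕ∞) (fun x : ℝ => x ^ q) (z.2) :=
      Real.contDiffAt_rpow_const_of_ne (by simp [hz])
    exact this.comp z contDiffAt_snd
  have hΦc : ContDiffAt ℝ (⊤ : ℕ∞) Φ z := by
    refine (c1.mul ((c2.mul c3).mul c4)).congr_of_eventuallyEq ?_
    exact Eventually.of_forall fun p => hΦ p
  -- derivative constant
  set B : ℝ := -(r₁ ^ m * (c - 1) ^ e₁) with hB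
  have hBne : B ≠ 0 := by
    have h1 : (0:ℝ) < r₁ ^ m := Real.rpow_pos_of_pos hr m
    have h2 : (0:ℝ) < (c - 1) ^ e₁ := Real.rpow_pos_of_pos hc1 e₁
    have := mul_pos h1 h2
    simp only [hB, neg_ne_zero]
    exact this.ne'
  -- HasFDerivAt of Φ at z
  set L : ℝ × ℝ →L[ℝ] ℝ := B • ContinuousLinearMap.snd ℝ ℝ ℝ with hL
  have hf1 : HasFDerivAt (fun p : ℝ × ℝ => p.1 ^ m)
      ((m * r₁ ^ (m - 1)) • ContinuousLinearMap.fst ℝ ℝ ℝ) z := by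
    have := (Real.hasDerivAt_rpow_const (p := m) (Or.inl hr.ne')).comp_hasFDerivAt z
      (hasFDerivAt_fst : HasFDerivAt _ (ContinuousLinearMap.fst ℝ ℝ ℝ) z)
    simpa [Function.comp_def] using this
  have hf2 : HasFDerivAt (fun p : ℝ × ℝ => 1 - p.2)
      ((-1 : ℝ) • ContinuousLinearMap.snd ℝ ℝ ℝ) z := by
    have := (hasFDerivAt_const (1:ℝ) z).sub (hasFDerivAt_snd : HasFDerivAt _ (ContinuousLinearMap.snd ℝ ℝ ℝ) z)
    exact this.congr_fderiv (by ext p <;> simp)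
  have hf3 : HasFDerivAt (fun p : ℝ × ℝ => (c - p.2) ^ e₁)
      ((e₁ * (c - 1) ^ (e₁ - 1)) • ((-1 : ℝ) • ContinuousLinearMap.snd ℝ ℝ ℝ)) z := by
    have hinner : HasFDerivAt (fun p : ℝ × ℝ => c - p.2)
        ((-1 : ℝ) • ContinuousLinearMap.snd ℝ ℝ ℝ) z := by
      have := (hasFDerivAt_const c z).sub (hasFDerivAt_snd : HasFDerivAt _ (ContinuousLinearMap.snd ℝ ℝ ℝ) z)
      exact this.congr_fderiv (by ext p <;> simp)
    have houter := Real.hasDerivAt_rpow_const (x := c - z.2) (p := e₁)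
      (Or.inl (by simpa [hz] using hc1ne))
    have := houter.comp_hasFDerivAt z hinner
    simpa [hz, Function.comp_def] using this
  have hf4 : HasFDerivAt (fun p : ℝ × ℝ => p.2 ^ q)
      ((q * (1:ℝ) ^ (q - 1)) • ContinuousLinearMap.snd ℝ ℝ ℝ) z := by
    have houter := Real.hasDerivAt_rpow_const (x := z.2) (p := q)
      (Or.inl (by simp [hz]))
    have := houter.comp_hasFDerivAt z (hasFDerivAt_snd : HasFDerivAt _ (ContinuousLinearMap.snd ℝ ℝ ℝ) z)
    simpa [hz, Function.comp_def] using this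
  have hΦ' : HasFDerivAt Φ L z := by
    have hmul := (hf1.mul ((hf2.mul hf3).mul hf4))
    have heq : Φ =ᶠ[nhds z] fun p : ℝ × ℝ =>
        p.1 ^ m * ((1 - p.2) * (c - p.2) ^ e₁ * p.2 ^ q) :=
      Eventually.of_forall fun p => hΦ p
    refine (HasFDerivAt.congr_of_eventuallyEq ?_ heq)
    refine hmul.congr_fderiv ?_
    have hz1 : z.1 = r₁ := rfl
    have hz2 : z.2 = (1:ℝ) := rfl
    ext p <;>
      simp [hL, hB, hz1, hz2, Real.one_rpow, mul_comm, mul_assoc, mul_left_comm]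
  -- first goal: smoothness of the slice
  have hslice : ContDiffAt ℝ (⊤ : ℕ∞) (fun k => Φ (r₁, k)) 1 := by
    have hcurve : ContDiffAt ℝ (⊤ : ℕ∞) (fun k : ℝ => ((r₁ : ℝ), k)) 1 :=
      contDiffAt_const.prodMk contDiffAt_id
    exact hΦc.comp 1 hcurve
  -- second goal: derivative of slice
  have hder : HasDerivAt (fun k => Φ (r₁, k)) B 1 := by
    have hcurve : HasDerivAt (fun k : ℝ => ((r₁ : ℝ), k)) ((0:ℝ), (1:ℝ)) 1 :=
      (hasDerivAt_const 1 r₁).prodMk (hasDerivAt_id 1)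
    have := hΦ'.comp_hasDerivAt 1 hcurve
    simpa [hL, Function.comp_def] using this
  refine ⟨hslice, by rw [hder.deriv]; exact hBne, ?_⟩
  -- inverse function theorem
  set F : ℝ × ℝ → ℝ × ℝ := fun p => (p.1, Φ p) with hF
  have hFc : ContDiffAt ℝ (⊤ : ℕ∞) F z := contDiffAt_fst.prodMk hΦc
  set e : (ℝ × ℝ) ≃L[ℝ] ℝ × ℝ :=
    (ContinuousLinearEquiv.refl ℝ ℝ).prodCongr
      (ContinuousLinearEquiv.unitsEquivAut ℝ (Units.mk0 B hBne)) with he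
  have hF' : HasFDerivAt F (e : (ℝ × ℝ) →L[ℝ] ℝ × ℝ) z := by
    have h := (hasFDerivAt_fst : HasFDerivAt _ (ContinuousLinearMap.fst ℝ ℝ ℝ) z).prodMk hΦ'
    refine h.congr_fderiv ?_
    ext p <;>
      simp [he, hL, ContinuousLinearEquiv.unitsEquivAut, mul_comm]
  have hn : ((⊤ : ℕ∞) : WithTop ℕ∞) ≠ 0 := by simp
  set g : ℝ × ℝ → ℝ × ℝ := hFc.localInverse hF' hn with hg
  have hFz : F z = (r₁, 0) := by show (z.1, Φ z) = (r₁, 0); rw [hΦ0]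
  have hginv : ∀ᶠ y in nhds (F z), F (g y) = y :=
    (hFc.hasStrictFDerivAt' hF' hn).eventually_right_inverse
  refine ⟨fun p => (g p).2, ?_, ?_, ?_⟩
  · have := contDiffAt_snd.comp (F z) (hFc.to_localInverse (hf' := hF') (hn := hn))
    rwa [hFz] at this
  · show (g (r₁, 0)).2 = 1
    have h : g (F z) = z := hFc.localInverse_apply_image hF' hn
    rw [hFz] at h
    rw [h]
  · show ∀ᶠ p : ℝ × ℝ in nhds (r₁, 0), Φ (p.1, (g p).2) = p.2
    rw [← hFz]
    filter_upwards [hginv] with p hp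
    have h1 : (g p).1 = p.1 := (Prod.ext_iff.mp hp).1
    have h2 : Φ (g p) = p.2 := (Prod.ext_iff.mp hp).2
    rw [← h1, Prod.mk.eta, h2]
end

section
/- Let μ ∈ ℝ and let k : ℝ × [0,T) → (0,1) be smooth. Define s(x,t) = κ⁻¹(k(x − μt, t)) where κ : ℝ → (0,1) is a smooth strictly increasing diffeomorphism onto (0,1) satisfying κ' = κ(1−κ)(μκ + c) with μ + c = 1, c > 0. If k satisfies the PDE ∂ₜk = ∂ₓ(∂ₓk/(k(1−k))), then Φ(x,t) := s(x,t) − x satisfies ∂ₜΦ = Φₓₓ/(k(1−k)) + μ·Φₓ·(Φₓ + 1). -/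
open Set

noncomputable def pd (k : ℝ → ℝ → ℝ) : ℝ → ℝ → ℝ := fun a b => deriv (fun a' => k a' b) a

lemma slice1_diff {k : ℝ → ℝ → ℝ} (hk : ContDiff ℝ (⊤ : ℕ∞) (Function.uncurry k)) (b : ℝ) :
    Differentiable ℝ (fun a => k a b) :=
  fun a => (HasFDerivAt.comp_hasDerivAt (l := Function.uncurry k) a ((hk.differentiable (by simp)) (a, b)).hasFDerivAt
    ((hasDerivAt_id a).prodMk (hasDerivAt_const a b))).differentiableAt

lemma slice2_diff {k : ℝ → ℝ → ℝ} (hk : ContDiff ℝ (⊤ : ℕ∞) (Function.uncurry k)) (a : ℝ) :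
    Differentiable ℝ (fun b => k a b) :=
  fun b => (HasFDerivAt.comp_hasDerivAt (l := Function.uncurry k) b ((hk.differentiable (by simp)) (a, b)).hasFDerivAt
    ((hasDerivAt_const b a).prodMk (hasDerivAt_id b))).differentiableAt

lemma pd_hasDerivAt {k : ℝ → ℝ → ℝ} (hk : ContDiff ℝ (⊤ : ℕ∞) (Function.uncurry k)) (a b : ℝ) :
    HasDerivAt (fun a' => k a' b) (pd k a b) a :=
  ((slice1_diff hk b) a).hasDerivAt

lemma pd_eq_fderiv {k : ℝ → ℝ → ℝ} (hk : ContDiff ℝ (⊤ : ℕ∞) (Function.uncurry k)) (a b : ℝ) :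
    pd k a b = fderiv ℝ (Function.uncurry k) (a, b) (1, 0) := by
  have h1 : HasDerivAt (fun a' : ℝ => (a', b)) ((1 : ℝ), (0 : ℝ)) a :=
    (hasDerivAt_id a).prodMk (hasDerivAt_const a b)
  have h2 : HasDerivAt (fun a' => k a' b) (fderiv ℝ (Function.uncurry k) (a, b) (1, 0)) a :=
    HasFDerivAt.comp_hasDerivAt (l := Function.uncurry k) a (hk.differentiable (by simp) (a, b)).hasFDerivAt h1
  unfold pd
  exact h2.deriv

lemma pd_smooth {k : ℝ → ℝ → ℝ} (hk : ContDiff ℝ (⊤ : ℕ∞) (Function.uncurry k)) :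
    ContDiff ℝ (⊤ : ℕ∞) (Function.uncurry (pd k)) := by
  have h : (Function.uncurry (pd k)) = fun q : ℝ × ℝ => fderiv ℝ (Function.uncurry k) q (1, 0) :=
    funext fun q => pd_eq_fderiv hk q.1 q.2
  rw [h]
  exact (hk.fderiv_right (by simp)).clm_apply contDiff_const

theorem stmt_15 (T μ c : ℝ) (hT : 0 < T) (hc : 0 < c) (hμc : μ + c = 1)
    (κ : ℝ → ℝ) (hκsmooth : ContDiff ℝ (⊤ : ℕ∞) κ) (hκmono : StrictMono κ)
    (hκrange : ∀ y, κ y ∈ Set.Ioo (0:ℝ) 1)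
    (hκode : ∀ y, deriv κ y = κ y * (1 - κ y) * (μ * κ y + c))
    (k : ℝ → ℝ → ℝ) (hksmooth : ContDiff ℝ (⊤ : ℕ∞) (Function.uncurry k))
    (hkrange : ∀ x t, k x t ∈ Set.Ioo (0:ℝ) 1)
    (hkpde : ∀ x, ∀ t ∈ Set.Ico 0 T,
      deriv (fun t' => k x t') t =
        deriv (fun x' => deriv (fun x'' => k x'' t) x' / (k x' t * (1 - k x' t))) x)
    (s : ℝ → ℝ → ℝ) (hssmooth : ContDiff ℝ (⊤ : ℕ∞) (Function.uncurry s))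
    (hs : ∀ x t, κ (s x t) = k (x - μ * t) t)
    (Φ : ℝ → ℝ → ℝ) (hΦ : ∀ x t, Φ x t = s x t - x) :
    ∀ x, ∀ t ∈ Set.Ico 0 T,
      deriv (fun t' => Φ x t') t =
        deriv (fun x' => deriv (fun x'' => Φ x'' t) x') x
            / (k (x - μ * t) t * (1 - k (x - μ * t) t))
          + μ * deriv (fun x' => Φ x' t) x * (deriv (fun x' => Φ x' t) x + 1) := by
  intro x t ht
  -- basic positivity
  have hκpos : ∀ y, 0 < deriv κ y := by
    intro y
    rw [hκode y]
    obtain ⟨h0, h1⟩ := hκrange y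
    have hlin : 0 < μ * κ y + c := by nlinarith
    exact mul_pos (mul_pos h0 (by linarith)) hlin
  obtain ⟨hk0, hk1⟩ := hkrange (x - μ * t) t
  have hq_ne : k (x - μ * t) t * (1 - k (x - μ * t) t) ≠ 0 :=
    ne_of_gt (mul_pos hk0 (by linarith))
  -- derivative facts for κ
  have hκd : ∀ y, HasDerivAt κ (deriv κ y) y := fun y =>
    ((hκsmooth.differentiable (by simp)) y).hasDerivAt
  have hκ'' : ∀ y, HasDerivAt (deriv κ)
      (κ y * (1 - κ y) * (μ * κ y + c) *
        ((1 - 2 * κ y) * (μ * κ y + c) + μ * (κ y * (1 - κ y)))) y := by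
    intro y
    have hd := hκd y
    have h2 := (hd.mul ((hasDerivAt_const y (1:ℝ)).sub hd)).mul ((hd.const_mul μ).add_const c)
    have h3 : (fun z => κ z * (1 - κ z) * (μ * κ z + c)) = deriv κ := (funext hκode).symm
    change HasDerivAt (fun z => κ z * (1 - κ z) * (μ * κ z + c))
      ((deriv κ y * (1 - κ y) + κ y * (0 - deriv κ y)) * (μ * κ y + c) +
        κ y * (1 - κ y) * (μ * deriv κ y)) y at h2
    rw [h3] at h2
    convert h2 using 1
    rw [hκode y]; ring
  -- H1 : first spatial derivative identity, for all points
  have hH1 : ∀ (a b : ℝ), deriv κ (s a b) * pd s a b = pd k (a - μ * b) b := by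
    intro a b
    have hsd := pd_hasDerivAt hssmooth a b
    have hl : HasDerivAt (fun a' => κ (s a' b)) (deriv κ (s a b) * pd s a b) a :=
      (hκd (s a b)).comp a hsd
    have hr : HasDerivAt (fun a' => κ (s a' b)) (pd k (a - μ * b) b) a := by
      have h1 : (fun a' => κ (s a' b)) = fun a' => k (a' - μ * b) b := funext fun a' => hs a' b
      rw [h1]
      have h2 : HasDerivAt (fun a' : ℝ => a' - μ * b) 1 a := (hasDerivAt_id a).sub_const _
      have h3 := pd_hasDerivAt hksmooth (a - μ * b) b
      have h4 := h3.comp a h2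
      rw [mul_one] at h4
      exact h4
    exact hl.unique hr
  -- H2 : second spatial derivative identity at (x, t)
  have hSxd : HasDerivAt (fun a' => pd s a' t) (pd (pd s) x t) x :=
    pd_hasDerivAt (pd_smooth hssmooth) x t
  have hsd := pd_hasDerivAt hssmooth x t
  have hH2 : κ (s x t) * (1 - κ (s x t)) * (μ * κ (s x t) + c) *
        ((1 - 2 * κ (s x t)) * (μ * κ (s x t) + c) + μ * (κ (s x t) * (1 - κ (s x t)))) *
        pd s x t * pd s x t
      + deriv κ (s x t) * pd (pd s) x t = pd (pd k) (x - μ * t) t := by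
    have hA : HasDerivAt (fun a' => deriv κ (s a' t))
        (κ (s x t) * (1 - κ (s x t)) * (μ * κ (s x t) + c) *
          ((1 - 2 * κ (s x t)) * (μ * κ (s x t) + c) + μ * (κ (s x t) * (1 - κ (s x t)))) *
          pd s x t) x := HasDerivAt.comp (h₂ := deriv κ) x (hκ'' (s x t)) hsd
    have hAB := hA.mul hSxd
    have hC : HasDerivAt (fun a' => pd k (a' - μ * t) t) (pd (pd k) (x - μ * t) t) x := by
      have h2 : HasDerivAt (fun a' : ℝ => a' - μ * t) 1 x := (hasDerivAt_id x).sub_const _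
      have h3 := pd_hasDerivAt (pd_smooth hksmooth) (x - μ * t) t
      have h4 := h3.comp x h2
      rw [mul_one] at h4
      exact h4
    have hfe : (fun a' => deriv κ (s a' t) * pd s a' t) = fun a' => pd k (a' - μ * t) t :=
      funext fun a' => hH1 a' t
    change HasDerivAt (fun a' => deriv κ (s a' t) * pd s a' t) _ x at hAB
    rw [hfe] at hAB
    have := hAB.unique hC
    linarith [this]
  -- H3 : time derivative identity at (x, t)
  have hstd : HasDerivAt (fun t' => s x t') (deriv (fun t' => s x t') t) t :=
    ((slice2_diff hssmooth x) t).hasDerivAt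
  have hKt : HasDerivAt (fun t' => k (x - μ * t) t')
      (fderiv ℝ (Function.uncurry k) (x - μ * t, t) (0, 1)) t :=
    (hksmooth.differentiable (by simp) (x - μ * t, t)).hasFDerivAt.comp_hasDerivAt t
      ((hasDerivAt_const t (x - μ * t)).prodMk (hasDerivAt_id t))
  have hH3 : deriv κ (s x t) * deriv (fun t' => s x t') t =
      -μ * pd k (x - μ * t) t + deriv (fun t' => k (x - μ * t) t') t := by
    have hl : HasDerivAt (fun t' => κ (s x t'))
        (deriv κ (s x t) * deriv (fun t' => s x t') t) t := (hκd (s x t)).comp t hstd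
    have hinner : HasDerivAt (fun t' : ℝ => ((x - μ * t' : ℝ), (t' : ℝ))) ((-μ : ℝ), (1 : ℝ)) t := by
      have h1 : HasDerivAt (fun t' : ℝ => x - μ * t') (-μ) t := by
        simpa using (((hasDerivAt_id t).const_mul μ).const_sub x)
      exact h1.prodMk (hasDerivAt_id t)
    have hr : HasDerivAt (fun t' => κ (s x t'))
        (fderiv ℝ (Function.uncurry k) (x - μ * t, t) (-μ, 1)) t := by
      have h1 : (fun t' => κ (s x t')) = fun t' => k (x - μ * t') t' := funext fun t' => hs x t'
      rw [h1]
      have hr0 := HasFDerivAt.comp_hasDerivAt (l := Function.uncurry k)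
        (f := fun t' : ℝ => ((x - μ * t' : ℝ), (t' : ℝ))) t
        (hksmooth.differentiable (by simp) (x - μ * t, t)).hasFDerivAt hinner
      exact hr0
    have hval : fderiv ℝ (Function.uncurry k) (x - μ * t, t) ((-μ : ℝ), (1 : ℝ)) =
        -μ * pd k (x - μ * t) t + deriv (fun t' => k (x - μ * t) t') t := by
      have hv : ((-μ : ℝ), (1 : ℝ)) = (-μ) • ((1 : ℝ), (0 : ℝ)) + ((0 : ℝ), (1 : ℝ)) := by
        simp [Prod.ext_iff]
      rw [hv, map_add, map_smul, ← pd_eq_fderiv hksmooth, hKt.deriv, smul_eq_mul]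
    rw [← hval]
    exact hl.unique hr
  -- H4 : the PDE expanded at x - μ t
  have hkd : HasDerivAt (fun x' => k x' t) (pd k (x - μ * t) t) (x - μ * t) :=
    pd_hasDerivAt hksmooth (x - μ * t) t
  have hH4 : deriv (fun t' => k (x - μ * t) t') t =
      (pd (pd k) (x - μ * t) t * (k (x - μ * t) t * (1 - k (x - μ * t) t)) -
        pd k (x - μ * t) t *
          (pd k (x - μ * t) t * (1 - k (x - μ * t) t) +
            k (x - μ * t) t * (0 - pd k (x - μ * t) t))) /
        (k (x - μ * t) t * (1 - k (x - μ * t) t)) ^ 2 := by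
    have num : HasDerivAt (fun x' => deriv (fun x'' => k x'' t) x') (pd (pd k) (x - μ * t) t)
        (x - μ * t) := pd_hasDerivAt (pd_smooth hksmooth) (x - μ * t) t
    have den : HasDerivAt (fun x' => k x' t * (1 - k x' t))
        (pd k (x - μ * t) t * (1 - k (x - μ * t) t) +
          k (x - μ * t) t * (0 - pd k (x - μ * t) t)) (x - μ * t) :=
      hkd.mul ((hasDerivAt_const _ (1:ℝ)).sub hkd)
    have hdiv := num.div den hq_ne
    exact (hkpde (x - μ * t) t ht).trans hdiv.deriv
  -- rewrite the goal in terms of partial derivatives of s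
  have hΦt : deriv (fun t' => Φ x t') t = deriv (fun t' => s x t') t := by
    have h1 : (fun t' => Φ x t') = fun t' => s x t' - x := funext fun t' => hΦ x t'
    rw [h1, deriv_sub_const]
  have hΦx : ∀ x', deriv (fun x'' => Φ x'' t) x' = pd s x' t - 1 := by
    intro x'
    have h1 : (fun x'' => Φ x'' t) = fun x'' => s x'' t - x'' := funext fun x'' => hΦ x'' t
    rw [h1]
    exact ((pd_hasDerivAt hssmooth x' t).sub (hasDerivAt_id x')).deriv
  have hΦxx : deriv (fun x' => deriv (fun x'' => Φ x'' t) x') x = pd (pd s) x t := by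
    have h1 : (fun x' => deriv (fun x'' => Φ x'' t) x') = fun x' => pd s x' t - 1 :=
      funext hΦx
    rw [h1]
    exact (hSxd.sub_const 1).deriv
  rw [hΦt, hΦxx, hΦx x]
  -- final algebra
  have hP_ne : deriv κ (s x t) ≠ 0 := ne_of_gt (hκpos _)
  apply mul_left_cancel₀ hP_ne
  rw [hH3, hH4, ← hH2, ← hH1 x t]
  rw [hκode (s x t), hs x t]
  field_simp
  ring
end
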